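/- arXiv:1703.06299 — 2 statements merged into one kernel-verified Lean document; each statement's English description precedes it below -/
import Mathlib

section
/- Let X be a real Banach space and H a C^∞ K-map on X all of whose iterated Fréchet derivatives are bounded on X. For ε > 0 set H_ε(x) = ε·H(x/ε). Let Y be a Banach space, j a nonnegative integer, and P_j a continuous homogeneous polynomial map of degree j from X to Y. Then for every n there is a constant c_{j,n} > 0, depending only on P_j, H and n (not on ε), such that sup_{x ∈ X} ‖D^n(P_j ∘ H_ε)(x)‖ ≤ ε^{j−n} · c_{j,n}. -/
/-!
Homogeneity of degree `j` gives `P (ε • H (ε⁻¹ • y)) = ε ^ j • (P ∘ H) (ε⁻¹ • y)`, and each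
derivative of `y ↦ (P ∘ H) (ε⁻¹ • y)` contributes a factor `ε⁻¹`, whence `ε ^ (j - n)`. It remains to bound
`D^n (P ∘ H)` uniformly: by Faà di Bruno it is controlled by the derivatives of `H`, which are
bounded, and the derivatives of `P` on the bounded range of `H`, which are bounded since `P` is a
polynomial.
-/

theorem exists_forall_le_of_forall_exists_le {α : Type*} {s : Set α} {u : ℕ → α → ℝ} {n : ℕ}
    (h : ∀ i ≤ n, ∃ C, ∀ a ∈ s, u i a ≤ C) : ∃ C, ∀ i ≤ n, ∀ a ∈ s, u i a ≤ C := by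
  obtain ⟨C, hC⟩ := (Set.finite_Iic n).bddAbove_biUnion (S := fun i => u i '' s) |>.2 fun i hi => by
    obtain ⟨C, hC⟩ := h i hi
    exact ⟨C, by rintro _ ⟨a, ha, rfl⟩; exact hC a ha⟩
  exact ⟨C, fun i hi a ha => hC (Set.mem_biUnion (x := i) hi ⟨a, ha, rfl⟩)⟩

section

variable {𝕜 E F G : Type*} [NontriviallyNormedField 𝕜]
  [NormedAddCommGroup E] [NormedSpace 𝕜 E] [NormedAddCommGroup F] [NormedSpace 𝕜 F]
  [NormedAddCommGroup G] [NormedSpace 𝕜 G]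

theorem ContinuousMultilinearMap.norm_iteratedFDeriv_comp_diagonal_le {k : ℕ}
    (f : E [×k]→L[𝕜] F) (i : ℕ) (x : E) :
    ‖iteratedFDeriv 𝕜 i (fun x => f fun _ => x) x‖ ≤ k.descFactorial i * ‖f‖ * ‖x‖ ^ (k - i) := by
  set Δ : E →L[𝕜] (Fin k → E) := ContinuousLinearMap.pi fun _ => ContinuousLinearMap.id 𝕜 E
  have hΔ : ‖Δ‖ ≤ 1 :=
    ContinuousLinearMap.norm_pi_le_of_le (fun _ => ContinuousLinearMap.norm_id_le) zero_le_one
  have hΔx : ‖Δ x‖ ≤ ‖x‖ := (pi_norm_le_iff_of_nonneg (norm_nonneg x)).2 fun _ => le_rfl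
  change ‖iteratedFDeriv 𝕜 i (f ∘ Δ) x‖ ≤ _
  rw [Δ.iteratedFDeriv_comp_right f.contDiff x le_rfl]
  calc _ ≤ ‖iteratedFDeriv 𝕜 i f (Δ x)‖ * ∏ _ : Fin i, ‖Δ‖ :=
        ContinuousMultilinearMap.norm_compContinuousLinearMap_le _ _
    _ ≤ ‖iteratedFDeriv 𝕜 i f (Δ x)‖ := by
        apply mul_le_of_le_one_right (norm_nonneg _)
        exact Finset.prod_le_one (fun _ _ => norm_nonneg _) fun _ _ => hΔ
    _ ≤ k.descFactorial i * ‖f‖ * ‖Δ x‖ ^ (k - i) := by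
        simpa using f.norm_iteratedFDeriv_le i (Δ x)
    _ ≤ k.descFactorial i * ‖f‖ * ‖x‖ ^ (k - i) := by gcongr

theorem exists_bound_iteratedFDeriv_comp {N : WithTop ℕ∞} {g : F → G} {f : E → F} {n : ℕ}
    (hg : ContDiff 𝕜 N g) (hf : ContDiff 𝕜 N f) (hn : n ≤ N) {s : Set F} (hfs : ∀ x, f x ∈ s)
    (hg_bdd : ∀ i ≤ n, ∃ C, ∀ y ∈ s, ‖iteratedFDeriv 𝕜 i g y‖ ≤ C)
    (hf_bdd : ∀ i ≤ n, ∃ C, ∀ x, ‖iteratedFDeriv 𝕜 i f x‖ ≤ C) :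
    ∃ C, ∀ x, ‖iteratedFDeriv 𝕜 n (g ∘ f) x‖ ≤ C := by
  obtain ⟨C, hC⟩ := exists_forall_le_of_forall_exists_le hg_bdd
  obtain ⟨D, hD⟩ := exists_forall_le_of_forall_exists_le (s := Set.univ)
    fun i hi => (hf_bdd i hi).imp fun _ hC x _ => hC x
  refine ⟨n.factorial * C * max D 1 ^ n, fun x => norm_iteratedFDeriv_comp_le hg hf hn x
    (fun i hi => hC i hi (f x) (hfs x)) fun i hi hin => ?_⟩
  calc _ ≤ max D 1 := (hD i hin x trivial).trans (le_max_left _ _)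
    _ ≤ max D 1 ^ i := le_self_pow₀ (le_max_right _ _) (by omega)

theorem norm_iteratedFDeriv_smul_comp_smul_le {f : E → F} {n : ℕ} (hf : ContDiff 𝕜 n f)
    (a b : 𝕜) {C : ℝ} (hC : ∀ x, ‖iteratedFDeriv 𝕜 n f x‖ ≤ C) (x : E) :
    ‖iteratedFDeriv 𝕜 n (fun y => b • f (a • y)) x‖ ≤ ‖b‖ * (‖a‖ ^ n * C) := by
  have hfa : ContDiff 𝕜 n fun y => f (a • y) := hf.comp (contDiff_const_smul a)
  rw [iteratedFDeriv_const_smul_apply' hfa.contDiffAt, iteratedFDeriv_comp_const_smul a hf,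
    norm_smul, norm_smul, norm_pow]
  gcongr
  exact hC _

end

theorem derivative_estimate_rescaled_general
    {X : Type*} [NormedAddCommGroup X] [NormedSpace ℝ X]
    {Y : Type*} [NormedAddCommGroup Y] [NormedSpace ℝ Y]
    (H : X → X) (hH : ContDiff ℝ (⊤ : ℕ∞) H)
    (hHbdd : ∃ C : ℝ, ∀ x, ‖H x‖ ≤ C)
    (hHder : ∀ n : ℕ, ∃ C : ℝ, ∀ x, ‖iteratedFDeriv ℝ n H x‖ ≤ C)
    (j : ℕ) (g : ContinuousMultilinearMap ℝ (fun _ : Fin j => X) Y)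
    (P : X → Y) (hP : ∀ x, P x = g (fun _ => x)) :
    ∀ n : ℕ, ∃ c : ℝ, 0 < c ∧ ∀ ε : ℝ, 0 < ε → ∀ x : X,
      ‖iteratedFDeriv ℝ n (fun y => P (ε • H (ε⁻¹ • y))) x‖ ≤
        ε ^ ((j : ℤ) - (n : ℤ)) * c := by
  intro n
  obtain ⟨R, hR⟩ := hHbdd
  have hPg : P = fun x => g fun _ => x := funext hP
  have hP_smul (ε : ℝ) (x : X) : P (ε • x) = ε ^ j • P x := by
    simpa [hPg] using g.map_smul_univ (fun _ => ε) fun _ => x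
  have hPsmooth : ContDiff ℝ (⊤ : ℕ∞) P :=
    hPg ▸ g.contDiff.comp (contDiff_pi.2 fun _ => contDiff_id)
  have hP_der (i : ℕ) (y : X) (hy : y ∈ Metric.closedBall 0 R) :
      ‖iteratedFDeriv ℝ i P y‖ ≤ j.descFactorial i * ‖g‖ * R ^ (j - i) := by
    rw [hPg]
    refine (g.norm_iteratedFDeriv_comp_diagonal_le i y).trans ?_
    gcongr
    exact mem_closedBall_zero_iff.1 hy
  obtain ⟨c, hc⟩ := exists_bound_iteratedFDeriv_comp hPsmooth hH (n := n) (mod_cast le_top)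
    (fun x => mem_closedBall_zero_iff.2 (hR x)) (fun i _ => ⟨_, hP_der i⟩) fun i _ => hHder i
  refine ⟨max c 1, by positivity, fun ε hε x => ?_⟩
  have hrescale : (fun y => P (ε • H (ε⁻¹ • y))) = fun y => ε ^ j • (P ∘ H) (ε⁻¹ • y) := by
    simp only [hP_smul, Function.comp_apply]
  rw [hrescale]
  calc _ ≤ ‖ε ^ j‖ * (‖ε⁻¹‖ ^ n * max c 1) := norm_iteratedFDeriv_smul_comp_smul_le
        ((hPsmooth.comp hH).of_le (mod_cast le_top)) _ _ (fun y => (hc y).trans (le_max_left _ _)) x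
    _ = ε ^ ((j : ℤ) - (n : ℤ)) * max c 1 := by
        rw [zpow_sub₀ hε.ne', zpow_natCast, zpow_natCast, Real.norm_of_nonneg (by positivity),
          Real.norm_of_nonneg (by positivity), inv_pow]
        ring

/-- Let `H` be a `C^∞` K-map on `X` with all iterated Fréchet derivatives bounded, and for
`ε > 0` let `H_ε x = ε • H (x / ε)`.  For a continuous homogeneous polynomial `P_j` of
degree `j` (given by a continuous symmetric `j`-linear map `g`), for every `n` there is a
constant `c > 0`, independent of `ε`, with
`‖D^n (P_j ∘ H_ε) x‖ ≤ ε ^ (j - n) * c` for all `x` and all `ε > 0`. -/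
theorem derivative_estimate_rescaled
    {X : Type*} [NormedAddCommGroup X] [NormedSpace ℝ X] [CompleteSpace X]
    {Y : Type*} [NormedAddCommGroup Y] [NormedSpace ℝ Y] [CompleteSpace Y]
    (H : X → X) (hH : ContDiff ℝ (⊤ : ℕ∞) H)
    (hHid : ∀ᶠ x in nhds (0 : X), H x = x)
    (hHbdd : ∃ C : ℝ, ∀ x, ‖H x‖ ≤ C)
    (hHder : ∀ n : ℕ, ∃ C : ℝ, ∀ x, ‖iteratedFDeriv ℝ n H x‖ ≤ C)
    (j : ℕ) (g : ContinuousMultilinearMap ℝ (fun _ : Fin j => X) Y)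
    (hsym : ∀ (v : Fin j → X) (σ : Equiv.Perm (Fin j)), g (v ∘ σ) = g v)
    (P : X → Y) (hP : ∀ x, P x = g (fun _ => x)) :
    ∀ n : ℕ, ∃ c : ℝ, 0 < c ∧ ∀ ε : ℝ, 0 < ε → ∀ x : X,
      ‖iteratedFDeriv ℝ n (fun y => P (ε • H (ε⁻¹ • y))) x‖ ≤
        ε ^ ((j : ℤ) - (n : ℤ)) * c :=
  derivative_estimate_rescaled_general H hH hHbdd hHder j g P hP
end

section
/- Let X = C([0,1], ℝ) with the supremum norm, and let h : ℝ → ℝ be a C^∞ function such that h(s) = s for |s| < 1/3, h(s) = 0 for |s| > 1/2, and |h(s)| ≤ 1/2 for all s, with all derivatives of h bounded. Then the function F : X → ℝ defined by F(x) = ∫₀¹ dt / (1 − h(x(t))) is well-defined and C^∞ on all of X, all of its iterated Fréchet derivatives are bounded on X, and F(x) = ∫₀¹ dt / (1 − x(t)) for every x ∈ X with ‖x‖ < 1/3. In particular, F is a global C^∞ representative of the germ at 0 of x ↦ ∫₀¹ dt/(1 − x(t)). -/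
/-!
Since `|h| ≤ 1/2`, the function `g = (1 - h)⁻¹` is smooth, and it equals `1` outside
`[-1/2, 1/2]`, so all of its derivatives are bounded. Now `F = (∫ ·) ∘ (g ∘ ·)`, where `∫` is a
bounded linear functional on `C([0,1], ℝ)`. The superposition operator `x ↦ g ∘ x` has derivative
`x ↦ (v ↦ (g' ∘ x) * v)` as soon as `g'` is Lipschitz, by a second order Taylor estimate; iterating,
the `n`-th derivative of `x ↦ g ∘ x` is `x ↦ g⁽ⁿ⁾ ∘ x` composed with multiplication maps of norm at
most `1`, hence bounded by `sup |g⁽ⁿ⁾|`.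
-/

open MeasureTheory
open scoped NNReal ContDiff

theorem lipschitzWith_of_hasDerivAt_norm_le {f f' : ℝ → ℝ} (hf : ∀ s, HasDerivAt f (f' s) s)
    {C : ℝ} (hC : ∀ s, ‖f' s‖ ≤ C) : LipschitzWith C.toNNReal f :=
  lipschitzOnWith_univ.1 <| convex_univ.lipschitzOnWith_of_nnnorm_hasDerivWithin_le
    (fun s _ => (hf s).hasDerivWithinAt) fun s _ => by
      rw [← NNReal.coe_le_coe, coe_nnnorm]
      exact (hC s).trans (Real.le_coe_toNNReal C)

theorem abs_sub_sub_mul_le_of_lipschitzWith {g g' : ℝ → ℝ} (hg : ∀ s, HasDerivAt g (g' s) s)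
    {K : ℝ≥0} (hK : LipschitzWith K g') (a b : ℝ) :
    |g b - g a - g' a * (b - a)| ≤ K * (b - a) ^ 2 := by
  let ψ : ℝ → ℝ := fun w => g w - g' a * w
  have hψ : ∀ w, HasDerivAt ψ (g' w - g' a) w := fun w => by
    simpa using (hg w).fun_sub ((hasDerivAt_id w).const_mul (g' a))
  have hψ_le : ∀ w ∈ Metric.closedBall a |b - a|, ‖g' w - g' a‖ ≤ K * |b - a| := fun w hw => by
    rw [← Real.dist_eq]
    exact (hK.dist_le_mul w a).trans (by gcongr; exact hw)
  have hb : b ∈ Metric.closedBall a |b - a| := by simp [Real.dist_eq]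
  calc |g b - g a - g' a * (b - a)| = ‖ψ b - ψ a‖ := by
        rw [Real.norm_eq_abs]; congr 1; ring
    _ ≤ K * |b - a| * ‖b - a‖ :=
        (convex_closedBall a _).norm_image_sub_le_of_norm_hasDerivWithin_le
          (fun w _ => (hψ w).hasDerivWithinAt) hψ_le
          (Metric.mem_closedBall_self (abs_nonneg _)) hb
    _ = K * (b - a) ^ 2 := by rw [Real.norm_eq_abs, mul_assoc, ← sq, sq_abs]

theorem exists_bound_iteratedDeriv_of_hasCompactSupport_sub_const {g : ℝ → ℝ}
    (hg : ContDiff ℝ ∞ g) {c : ℝ} (hc : HasCompactSupport fun s => g s - c) (k : ℕ) :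
    ∃ C, ∀ s, ‖iteratedDeriv k g s‖ ≤ C := by
  have hφ : ContDiff ℝ ∞ fun s => g s - c := hg.sub contDiff_const
  obtain ⟨C, hC⟩ := (hφ.continuous_iteratedFDeriv (m := k) (mod_cast le_top)).norm
    |>.bounded_above_of_compact_support (hc.iteratedFDeriv k).norm
  have hφC : ∀ s, ‖iteratedDeriv k (fun s => g s - c) s‖ ≤ C := fun s => by
    simpa [← norm_iteratedFDeriv_eq_norm_iteratedDeriv] using hC s
  have hg_eq : g = fun s => c + (g s - c) := by simp
  refine ⟨‖c‖ + C, fun s => ?_⟩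
  rw [hg_eq]
  rcases k with _ | k
  · rw [iteratedDeriv_zero] at hφC ⊢
    exact (norm_add_le _ _).trans (add_le_add_right (hφC s) _)
  · rw [iteratedDeriv_const_add k.succ_pos]
    exact (hφC s).trans (le_add_of_nonneg_left (norm_nonneg c))

namespace ContinuousMap

variable {X : Type*} [TopologicalSpace X] [CompactSpace X]

theorem hasFDerivAt_postcomp {g g' : C(ℝ, ℝ)} (hg : ∀ s, HasDerivAt g (g' s) s) {K : ℝ≥0}
    (hK : LipschitzWith K g') (x : C(X, ℝ)) :
    HasFDerivAt (g.comp : C(X, ℝ) → C(X, ℝ))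
      (ContinuousLinearMap.mul ℝ C(X, ℝ) (g'.comp x)) x := by
  rw [hasFDerivAt_iff_isLittleO_nhds_zero]
  refine Asymptotics.IsBigO.trans_isLittleO (.of_bound K (.of_forall fun v => ?_))
    (Asymptotics.isLittleO_norm_pow_id one_lt_two)
  rw [Real.norm_of_nonneg (by positivity)]
  refine (norm_le _ (by positivity)).mpr fun t => ?_
  have hvt : |v t| ≤ ‖v‖ := by simpa using v.norm_coe_le_norm t
  have hTaylor := abs_sub_sub_mul_le_of_lipschitzWith hg hK (x t) (x t + v t)
  simp only [add_sub_cancel_left] at hTaylor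
  simp only [sub_apply, comp_apply, add_apply, ContinuousLinearMap.mul_apply', mul_apply,
    Real.norm_eq_abs]
  exact hTaylor.trans
    (mul_le_mul_of_nonneg_left (sq_le_sq' (abs_le.mp hvt).1 (abs_le.mp hvt).2) K.2)

section HasDerivAtSucc

variable {g : ℕ → C(ℝ, ℝ)}

theorem hasFDerivAt_postcomp_of_hasDerivAt_succ (hg : ∀ k s, HasDerivAt (g k) (g (k + 1) s) s)
    (hb : ∀ k, ∃ C, ∀ s, ‖g k s‖ ≤ C) (k : ℕ) (x : C(X, ℝ)) :
    HasFDerivAt (g k).comp (ContinuousLinearMap.mul ℝ C(X, ℝ) ((g (k + 1)).comp x)) x := by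
  obtain ⟨C, hC⟩ := hb (k + 2)
  exact hasFDerivAt_postcomp (hg k) (lipschitzWith_of_hasDerivAt_norm_le (hg (k + 1)) hC) x

theorem fderiv_postcomp_of_hasDerivAt_succ (hg : ∀ k s, HasDerivAt (g k) (g (k + 1) s) s)
    (hb : ∀ k, ∃ C, ∀ s, ‖g k s‖ ≤ C) (k : ℕ) :
    fderiv ℝ ((g k).comp : C(X, ℝ) → C(X, ℝ)) =
      ContinuousLinearMap.mul ℝ C(X, ℝ) ∘ (g (k + 1)).comp :=
  funext fun x => (hasFDerivAt_postcomp_of_hasDerivAt_succ hg hb k x).fderiv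

theorem contDiff_postcomp_of_hasDerivAt_succ (hg : ∀ k s, HasDerivAt (g k) (g (k + 1) s) s)
    (hb : ∀ k, ∃ C, ∀ s, ‖g k s‖ ≤ C) (n k : ℕ) :
    ContDiff ℝ n ((g k).comp : C(X, ℝ) → C(X, ℝ)) := by
  induction n generalizing k with
  | zero => exact contDiff_zero.mpr (continuous_postcomp _)
  | succ n ih =>
    rw [Nat.cast_succ, contDiff_succ_iff_fderiv, fderiv_postcomp_of_hasDerivAt_succ hg hb]
    have hmul : ContDiff ℝ n (ContinuousLinearMap.mul ℝ C(X, ℝ)) :=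
      ContinuousLinearMap.contDiff (F := C(X, ℝ) →L[ℝ] C(X, ℝ)) _
    exact ⟨fun x => (hasFDerivAt_postcomp_of_hasDerivAt_succ hg hb k x).differentiableAt,
      by simp, hmul.comp (ih (k + 1))⟩

theorem exists_bound_iteratedFDeriv_postcomp_of_hasDerivAt_succ
    (hg : ∀ k s, HasDerivAt (g k) (g (k + 1) s) s) (hb : ∀ k, ∃ C, ∀ s, ‖g k s‖ ≤ C)
    (n k : ℕ) : ∃ C, ∀ x : C(X, ℝ), ‖iteratedFDeriv ℝ n (g k).comp x‖ ≤ C := by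
  induction n generalizing k with
  | zero =>
    obtain ⟨C, hC⟩ := hb k
    refine ⟨max C 0, fun x => ?_⟩
    rw [norm_iteratedFDeriv_zero]
    exact (norm_le _ (le_max_right C 0)).mpr fun t => (hC (x t)).trans (le_max_left C 0)
  | succ n ih =>
    obtain ⟨C, hC⟩ := ih (k + 1)
    refine ⟨C, fun x => ?_⟩
    rw [← norm_iteratedFDeriv_fderiv, fderiv_postcomp_of_hasDerivAt_succ hg hb]
    calc _ ≤ ‖ContinuousLinearMap.mul ℝ C(X, ℝ)‖ * ‖iteratedFDeriv ℝ n (g (k + 1)).comp x‖ :=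
          ContinuousLinearMap.norm_iteratedFDeriv_comp_left (G := C(X, ℝ) →L[ℝ] C(X, ℝ)) _
            (contDiff_postcomp_of_hasDerivAt_succ hg hb n (k + 1)).contDiffAt le_rfl
      _ ≤ ‖iteratedFDeriv ℝ n (g (k + 1)).comp x‖ :=
          mul_le_of_le_one_left (norm_nonneg _) (ContinuousLinearMap.opNorm_mul_le ℝ _)
      _ ≤ C := hC x

end HasDerivAtSucc

noncomputable def iteratedDerivSeq {g : C(ℝ, ℝ)} (hg : ContDiff ℝ ∞ g) (k : ℕ) : C(ℝ, ℝ) :=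
  ⟨iteratedDeriv k g, hg.continuous_iteratedDeriv k (mod_cast le_top)⟩

theorem iteratedDerivSeq_zero {g : C(ℝ, ℝ)} (hg : ContDiff ℝ ∞ g) : iteratedDerivSeq hg 0 = g :=
  ext fun _ => by simp [iteratedDerivSeq]

theorem hasDerivAt_iteratedDerivSeq {g : C(ℝ, ℝ)} (hg : ContDiff ℝ ∞ g) (k : ℕ) (s : ℝ) :
    HasDerivAt (iteratedDerivSeq hg k) (iteratedDerivSeq hg (k + 1) s) s := by
  simp only [iteratedDerivSeq, coe_mk, iteratedDeriv_succ]
  exact (hg.differentiable_iteratedDeriv k (mod_cast ENat.natCast_lt_top k) s).hasDerivAt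

theorem contDiff_postcomp_of_bounded_iteratedDeriv {g : C(ℝ, ℝ)} (hg : ContDiff ℝ ∞ g)
    (hb : ∀ k, ∃ C, ∀ s, ‖iteratedDeriv k g s‖ ≤ C) :
    ContDiff ℝ ∞ (g.comp : C(X, ℝ) → C(X, ℝ)) :=
  contDiff_infty.mpr fun n => by
    simpa only [iteratedDerivSeq_zero] using
      contDiff_postcomp_of_hasDerivAt_succ (hasDerivAt_iteratedDerivSeq hg) hb n 0

theorem exists_bound_iteratedFDeriv_postcomp_of_bounded_iteratedDeriv {g : C(ℝ, ℝ)}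
    (hg : ContDiff ℝ ∞ g) (hb : ∀ k, ∃ C, ∀ s, ‖iteratedDeriv k g s‖ ≤ C) (n : ℕ) :
    ∃ C, ∀ x : C(X, ℝ), ‖iteratedFDeriv ℝ n g.comp x‖ ≤ C := by
  simpa only [iteratedDerivSeq_zero] using
    exists_bound_iteratedFDeriv_postcomp_of_hasDerivAt_succ (hasDerivAt_iteratedDerivSeq hg) hb n 0

variable [MeasurableSpace X] [BorelSpace X]

noncomputable def integralCLM (μ : Measure X) [IsFiniteMeasure μ] : C(X, ℝ) →L[ℝ] ℝ :=
  L1.integralCLM.comp (toLp 1 μ ℝ)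

theorem integralCLM_apply (μ : Measure X) [IsFiniteMeasure μ] (f : C(X, ℝ)) :
    integralCLM μ f = ∫ x, f x ∂μ := by
  rw [integralCLM, ContinuousLinearMap.comp_apply, ← L1.integral_eq, L1.integral_eq_integral]
  exact integral_congr_ae (coeFn_toLp μ f)

end ContinuousMap

theorem integral_germ_global_representative_general
    (h : ℝ → ℝ) (hh : ContDiff ℝ (⊤ : ℕ∞) h)
    (hid : ∀ s : ℝ, |s| < 1 / 3 → h s = s)
    (hvanish : ∀ s : ℝ, 1 / 2 < |s| → h s = 0)
    (hbound : ∀ s : ℝ, |h s| ≤ 1 / 2)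
    (F : C(unitInterval, ℝ) → ℝ)
    (hF : ∀ x : C(unitInterval, ℝ), F x = ∫ t : unitInterval, (1 - h (x t))⁻¹) :
    ContDiff ℝ (⊤ : ℕ∞) F ∧
      (∀ n : ℕ, ∃ C : ℝ, ∀ x, ‖iteratedFDeriv ℝ n F x‖ ≤ C) ∧
      ∀ x : C(unitInterval, ℝ), ‖x‖ < 1 / 3 →
        F x = ∫ t : unitInterval, (1 - x t)⁻¹ := by
  have hne : ∀ s, 1 - h s ≠ 0 := fun s => by linarith [(abs_le.mp (hbound s)).2]
  let g : C(ℝ, ℝ) := ⟨fun s => (1 - h s)⁻¹, (continuous_const.sub hh.continuous).inv₀ hne⟩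
  have hg : ContDiff ℝ ∞ g := (contDiff_const.sub hh).inv hne
  have hg_sub_one : HasCompactSupport fun s => g s - 1 :=
    .intro (isCompact_closedBall 0 (1 / 2)) fun s hs => by
      simp [g, hvanish s (by simpa using hs)]
  have hb := exists_bound_iteratedDeriv_of_hasCompactSupport_sub_const hg hg_sub_one
  have hsmooth : ContDiff ℝ ∞ (g.comp : C(unitInterval, ℝ) → C(unitInterval, ℝ)) :=
    ContinuousMap.contDiff_postcomp_of_bounded_iteratedDeriv hg hb
  set L : C(unitInterval, ℝ) →L[ℝ] ℝ := ContinuousMap.integralCLM volume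
  have hFg : F = L ∘ g.comp := funext fun x => by
    rw [hF, Function.comp_apply, ContinuousMap.integralCLM_apply]; rfl
  rw [hFg]
  refine ⟨L.contDiff.comp hsmooth, fun n => ?_, fun x hx => ?_⟩
  · obtain ⟨C, hC⟩ := ContinuousMap.exists_bound_iteratedFDeriv_postcomp_of_bounded_iteratedDeriv
      (X := unitInterval) hg hb n
    exact ⟨‖L‖ * C, fun x => (L.norm_iteratedFDeriv_comp_left hsmooth.contDiffAt
      (mod_cast le_top)).trans (by gcongr; exact hC x)⟩
  · rw [← hFg, hF]
    congr with t
    rw [hid (x t) ((x.norm_coe_le_norm t).trans_lt hx)]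

/-- Let `X = C([0,1], ℝ)` with the sup norm and let `h : ℝ → ℝ` be `C^∞` with `h s = s` for
`|s| < 1/3`, `h s = 0` for `|s| > 1/2`, `|h s| ≤ 1/2` for all `s`, and all derivatives of
`h` bounded.  Then `F x = ∫₀¹ (1 - h (x t))⁻¹ dt` is `C^∞` on all of `X`, all of its
iterated Fréchet derivatives are bounded, and `F x = ∫₀¹ (1 - x t)⁻¹ dt` whenever
`‖x‖ < 1/3`; so `F` is a global `C^∞` representative of the germ at `0` of
`x ↦ ∫₀¹ (1 - x t)⁻¹ dt`. -/
theorem integral_germ_global_representative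
    (h : ℝ → ℝ) (hh : ContDiff ℝ (⊤ : ℕ∞) h)
    (hid : ∀ s : ℝ, |s| < 1 / 3 → h s = s)
    (hvanish : ∀ s : ℝ, 1 / 2 < |s| → h s = 0)
    (hbound : ∀ s : ℝ, |h s| ≤ 1 / 2)
    (hder : ∀ n : ℕ, ∃ C : ℝ, ∀ s : ℝ, |iteratedDeriv n h s| ≤ C)
    (F : C(unitInterval, ℝ) → ℝ)
    (hF : ∀ x : C(unitInterval, ℝ), F x = ∫ t : unitInterval, (1 - h (x t))⁻¹) :
    ContDiff ℝ (⊤ : ℕ∞) F ∧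
      (∀ n : ℕ, ∃ C : ℝ, ∀ x, ‖iteratedFDeriv ℝ n F x‖ ≤ C) ∧
      ∀ x : C(unitInterval, ℝ), ‖x‖ < 1 / 3 →
        F x = ∫ t : unitInterval, (1 - x t)⁻¹ :=
  integral_germ_global_representative_general h hh hid hvanish hbound F hF
end
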